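/- arXiv:2402.01600 — 5 statements merged into one kernel-verified Lean document; each statement's English description precedes it below -/
import Mathlib

section
/- Let q > 0, let A be a finite vertex subset of G and let S be a q-isolated core of G. Then Δ_q A ≤ Δ_q(A ∪ S), with equality if and only if S ⊆ A. -/
open SimpleGraph

variable {V : Type*}

/-- The edge boundary `∂S` of a vertex set `S`: the set of edges of `G` with one endpoint
in `S` and the other endpoint outside `S`. -/
def edgeBdry (G : SimpleGraph V) (S : Set V) : Set (Sym2 V) :=
  {e | e ∈ G.edgeSet ∧ ∃ x ∈ S, ∃ y ∉ S, e = s(x, y)}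

/-- The `q`-isolation `Δ_q S := q·|S| − |∂S|` of a vertex set `S`. -/
noncomputable def isolation (G : SimpleGraph V) (q : ℝ) (S : Set V) : ℝ :=
  q * (S.ncard : ℝ) - ((edgeBdry G S).ncard : ℝ)

/-- A finite vertex set `S` is a `q`-isolated core if `Δ_q S > Δ_q A` for every
proper subset `A ⊊ S`. -/
def IsIsolatedCore (G : SimpleGraph V) (q : ℝ) (S : Set V) : Prop :=
  S.Finite ∧ ∀ A : Set V, A ⊂ S → isolation G q A < isolation G q S

/-- `A_q`: the union of all `q`-isolated cores of `G`. -/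
def coreUnion (G : SimpleGraph V) (q : ℝ) : Set V :=
  ⋃₀ {S : Set V | IsIsolatedCore G q S}

/-- A `q`-island: a connected component of (the subgraph of `G` induced by) `A_q`,
characterised as a nonempty connected subset of `A_q` which is closed under
adjacency within `A_q`. -/
def IsIsland (G : SimpleGraph V) (q : ℝ) (C : Set V) : Prop :=
  C ⊆ coreUnion G q ∧ (G.induce C).Connected ∧
    ∀ x ∈ C, ∀ y ∈ coreUnion G q, G.Adj x y → y ∈ C

/-- The anchored expansion constant
`i(G) = lim_{n→∞} inf { |∂K|/|K| : o ∈ K ⊆ G connected, n ≤ |K| < ∞ }`;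
since the infima are nondecreasing in `n`, the limit equals the supremum over `n`. -/
noncomputable def anchoredExpansion (G : SimpleGraph V) (o : V) : ℝ :=
  ⨆ n : ℕ, sInf {r : ℝ | ∃ K : Set V, o ∈ K ∧ K.Finite ∧ (G.induce K).Connected ∧
    n ≤ K.ncard ∧ r = ((edgeBdry G K).ncard : ℝ) / (K.ncard : ℝ)}

/-- The set of children of a vertex `x` in the tree rooted at `o`: the neighbours of `x`
at larger graph distance from the root. -/
def children (G : SimpleGraph V) (o x : V) : Set V :=
  {y | G.Adj x y ∧ G.dist o y = G.dist o x + 1}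

/-- Let `q > 0`, let `A` be a finite vertex subset of `G` and let `S` be a `q`-isolated core
of `G`. Then `Δ_q A ≤ Δ_q (A ∪ S)`, with equality if and only if `S ⊆ A`. -/
theorem stmt2 (G : SimpleGraph V) (hloc : ∀ v : V, (G.neighborSet v).Finite)
    (q : ℝ) (hq : 0 < q) (A S : Set V) (hA : A.Finite) (hS : IsIsolatedCore G q S) :
    isolation G q A ≤ isolation G q (A ∪ S) ∧
      (isolation G q A = isolation G q (A ∪ S) ↔ S ⊆ A) := by
  classical
  have hSfin : S.Finite := hS.1
  -- finiteness of edge boundaries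
  have bdry_fin : ∀ T : Set V, T.Finite → (edgeBdry G T).Finite := by
    intro T hT
    apply Set.Finite.subset (hT.biUnion (fun v _ => ((hloc v).image (fun w => s(v, w)))))
    rintro e ⟨he, x, hx, y, hy, rfl⟩
    exact Set.mem_biUnion hx ⟨y, (G.mem_edgeSet).mp he, rfl⟩
  have hfA := bdry_fin A hA
  have hfS := bdry_fin S hSfin
  have hfU := bdry_fin (A ∪ S) (hA.union hSfin)
  have hfI := bdry_fin (A ∩ S) (hA.inter_of_left S)
  -- inclusion 1
  have hsub1 : edgeBdry G (A ∪ S) ∪ edgeBdry G (A ∩ S) ⊆ edgeBdry G A ∪ edgeBdry G S := by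
    rintro e (⟨he, x, hx, y, hy, rfl⟩ | ⟨he, x, hx, y, hy, rfl⟩)
    · rcases hx with hx | hx
      · exact Or.inl ⟨he, x, hx, y, fun h => hy (Or.inl h), rfl⟩
      · exact Or.inr ⟨he, x, hx, y, fun h => hy (Or.inr h), rfl⟩
    · by_cases hyA : y ∈ A
      · exact Or.inr ⟨he, x, hx.2, y, fun h => hy ⟨hyA, h⟩, rfl⟩
      · exact Or.inl ⟨he, x, hx.1, y, hyA, rfl⟩
  -- inclusion 2
  have hsub2 : edgeBdry G (A ∪ S) ∩ edgeBdry G (A ∩ S) ⊆ edgeBdry G A ∩ edgeBdry G S := by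
    rintro e ⟨⟨he, x, hx, y, hy, rfl⟩, ⟨he', a, ha, b, hb, hab⟩⟩
    rw [Sym2.eq_iff] at hab
    rcases hab with ⟨rfl, rfl⟩ | ⟨rfl, rfl⟩
    · exact ⟨⟨he, x, ha.1, y, fun h => hy (Or.inl h), rfl⟩,
        ⟨he, x, ha.2, y, fun h => hy (Or.inr h), rfl⟩⟩
    · exact absurd (Or.inl ha.1) hy
  -- submodularity of the edge boundary
  have hEcard : (edgeBdry G (A ∪ S)).ncard + (edgeBdry G (A ∩ S)).ncard ≤
      (edgeBdry G A).ncard + (edgeBdry G S).ncard := by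
    have h1 := Set.ncard_union_add_ncard_inter (edgeBdry G (A ∪ S)) (edgeBdry G (A ∩ S)) hfU hfI
    have h2 := Set.ncard_union_add_ncard_inter (edgeBdry G A) (edgeBdry G S) hfA hfS
    have h3 : (edgeBdry G (A ∪ S) ∪ edgeBdry G (A ∩ S)).ncard ≤
        (edgeBdry G A ∪ edgeBdry G S).ncard :=
      Set.ncard_le_ncard hsub1 (hfA.union hfS)
    have h4 : (edgeBdry G (A ∪ S) ∩ edgeBdry G (A ∩ S)).ncard ≤
        (edgeBdry G A ∩ edgeBdry G S).ncard :=
      Set.ncard_le_ncard hsub2 (hfA.inter_of_left _)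
    omega
  -- modularity of vertex counts
  have hVcard : (A ∪ S).ncard + (A ∩ S).ncard = A.ncard + S.ncard :=
    Set.ncard_union_add_ncard_inter A S hA hSfin
  -- supermodularity of isolation
  have hkey : isolation G q A + isolation G q S ≤
      isolation G q (A ∪ S) + isolation G q (A ∩ S) := by
    unfold isolation
    have hE : ((edgeBdry G (A ∪ S)).ncard : ℝ) + (edgeBdry G (A ∩ S)).ncard ≤
        ((edgeBdry G A).ncard : ℝ) + (edgeBdry G S).ncard := by exact_mod_cast hEcard
    have hV : ((A ∪ S).ncard : ℝ) + ((A ∩ S).ncard : ℝ) = (A.ncard : ℝ) + S.ncard := by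
      exact_mod_cast hVcard
    nlinarith [hV, hE]
  by_cases hSA : S ⊆ A
  · have : A ∪ S = A := Set.union_eq_self_of_subset_right hSA
    rw [this]
    exact ⟨le_refl _, by simp [hSA]⟩
  · have hss : A ∩ S ⊂ S := by
      refine ⟨Set.inter_subset_right, fun h => hSA fun x hx => (h hx).1⟩
    have hlt : isolation G q (A ∩ S) < isolation G q S := hS.2 _ hss
    have hstrict : isolation G q A < isolation G q (A ∪ S) := by linarith
    exact ⟨le_of_lt hstrict, ⟨fun h => absurd h (ne_of_lt hstrict), fun h => absurd h hSA⟩⟩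
end

section
/- Let q > 0. The union of finitely many q-isolated cores of G is again a q-isolated core of G. -/
open SimpleGraph

variable {V : Type*}

/-! The isolation `Δ_q` is supermodular, because the boundary size is submodular. Hence adding a
core `C` to a finite set `A` never decreases `Δ_q A`, and strictly increases it unless `C ⊆ A`,
since `Δ_q (A ∪ C) - Δ_q A ≥ Δ_q C - Δ_q (A ∩ C)`. For a proper subset `A` of `S ∪ T`, passing
from `A` to `A ∪ S` and then to `A ∪ S ∪ T = S ∪ T` is thus strictly increasing at one of the
two steps. -/

theorem Set.ncard_add_ncard_le_of_union_subset_of_inter_subset {α : Type*} {A B C D : Set α}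
    (hC : C.Finite) (hD : D.Finite) (hunion : A ∪ B ⊆ C ∪ D) (hinter : A ∩ B ⊆ C ∩ D) :
    A.ncard + B.ncard ≤ C.ncard + D.ncard := by
  have hAB : (A ∪ B).Finite := (hC.union hD).subset hunion
  rw [← Set.ncard_union_add_ncard_inter _ _ (hAB.subset Set.subset_union_left)
      (hAB.subset Set.subset_union_right), ← Set.ncard_union_add_ncard_inter _ _ hC hD]
  exact add_le_add (Set.ncard_le_ncard hunion (hC.union hD))
    (Set.ncard_le_ncard hinter (hC.inter_of_left D))

theorem mem_edgeBdry_mk (G : SimpleGraph V) (S : Set V) (x y : V) :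
    s(x, y) ∈ edgeBdry G S ↔ G.Adj x y ∧ (x ∈ S ↔ y ∉ S) := by
  constructor
  · rintro ⟨hxy, a, ha, b, hb, hab⟩
    rcases Sym2.eq_iff.mp hab with ⟨rfl, rfl⟩ | ⟨rfl, rfl⟩ <;> exact ⟨hxy, by tauto⟩
  · rintro ⟨hxy, hS⟩
    refine ⟨hxy, ?_⟩
    by_cases hx : x ∈ S
    · exact ⟨x, hx, y, hS.mp hx, rfl⟩
    · exact ⟨y, not_not.mp (mt hS.mpr hx), x, hx, Sym2.eq_swap⟩

theorem edgeBdry_finite (G : SimpleGraph V) (hloc : ∀ v : V, (G.neighborSet v).Finite)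
    {S : Set V} (hS : S.Finite) : (edgeBdry G S).Finite := by
  refine (hS.biUnion fun x _ => (hloc x).image fun y => s(x, y)).subset ?_
  rintro e ⟨he, x, hx, y, -, rfl⟩
  exact Set.mem_biUnion hx ⟨y, he, rfl⟩

theorem edgeBdry_union_add_edgeBdry_inter_le (G : SimpleGraph V)
    (hloc : ∀ v : V, (G.neighborSet v).Finite) {S T : Set V} (hS : S.Finite) (hT : T.Finite) :
    (edgeBdry G (S ∪ T)).ncard + (edgeBdry G (S ∩ T)).ncard ≤
      (edgeBdry G S).ncard + (edgeBdry G T).ncard := by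
  refine Set.ncard_add_ncard_le_of_union_subset_of_inter_subset
    (edgeBdry_finite G hloc hS) (edgeBdry_finite G hloc hT) ?_ ?_ <;>
  · intro e
    induction e using Sym2.ind
    simp only [Set.mem_union, Set.mem_inter_iff, mem_edgeBdry_mk]
    tauto

theorem isolation_add_isolation_le (G : SimpleGraph V)
    (hloc : ∀ v : V, (G.neighborSet v).Finite) (q : ℝ) {S T : Set V} (hS : S.Finite)
    (hT : T.Finite) :
    isolation G q S + isolation G q T ≤ isolation G q (S ∪ T) + isolation G q (S ∩ T) := by
  have hcard : ((S ∪ T).ncard : ℝ) + (S ∩ T).ncard = S.ncard + T.ncard := by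
    exact_mod_cast Set.ncard_union_add_ncard_inter S T hS hT
  have hbdry : ((edgeBdry G (S ∪ T)).ncard : ℝ) + (edgeBdry G (S ∩ T)).ncard ≤
      (edgeBdry G S).ncard + (edgeBdry G T).ncard := by
    exact_mod_cast edgeBdry_union_add_edgeBdry_inter_le G hloc hS hT
  simp only [isolation]
  linear_combination (-q) * hcard + hbdry

theorem isIsolatedCore_empty (G : SimpleGraph V) (q : ℝ) : IsIsolatedCore G q ∅ :=
  ⟨Set.finite_empty, fun _ hA => absurd hA not_lt_bot⟩

namespace IsIsolatedCore

variable {G : SimpleGraph V} {q : ℝ} {A C : Set V}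

theorem isolation_le_of_subset (hC : IsIsolatedCore G q C) (hAC : A ⊆ C) :
    isolation G q A ≤ isolation G q C := by
  rcases hAC.ssubset_or_eq with hAC | rfl
  · exact (hC.2 A hAC).le
  · exact le_rfl

theorem isolation_le_union (hloc : ∀ v : V, (G.neighborSet v).Finite)
    (hC : IsIsolatedCore G q C) (hA : A.Finite) :
    isolation G q A ≤ isolation G q (A ∪ C) := by
  have := isolation_add_isolation_le G hloc q hA hC.1
  have := hC.isolation_le_of_subset (Set.inter_subset_right (s := A))
  linarith

theorem isolation_lt_union (hloc : ∀ v : V, (G.neighborSet v).Finite)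
    (hC : IsIsolatedCore G q C) (hA : A.Finite) (hCA : ¬C ⊆ A) :
    isolation G q A < isolation G q (A ∪ C) := by
  have := isolation_add_isolation_le G hloc q hA hC.1
  have := hC.2 (A ∩ C) ⟨Set.inter_subset_right, fun h => hCA fun x hx => (h hx).1⟩
  linarith

theorem union (hloc : ∀ v : V, (G.neighborSet v).Finite) {S T : Set V}
    (hS : IsIsolatedCore G q S) (hT : IsIsolatedCore G q T) : IsIsolatedCore G q (S ∪ T) := by
  refine ⟨hS.1.union hT.1, fun A hA => ?_⟩
  have hAf : A.Finite := (hS.1.union hT.1).subset hA.subset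
  by_cases hSA : S ⊆ A
  · have hTA : ¬T ⊆ A := fun hTA => hA.not_subset (Set.union_subset hSA hTA)
    have hAT : A ∪ T = S ∪ T :=
      (Set.union_subset hA.subset Set.subset_union_right).antisymm
        (Set.union_subset_union_left T hSA)
    simpa only [hAT] using hT.isolation_lt_union hloc hAf hTA
  · have hAST : A ∪ S ∪ T = S ∪ T := by
      rw [Set.union_assoc, Set.union_eq_right.mpr hA.subset]
    calc isolation G q A < isolation G q (A ∪ S) := hS.isolation_lt_union hloc hAf hSA
      _ ≤ isolation G q (A ∪ S ∪ T) := hT.isolation_le_union hloc (hAf.union hS.1)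
      _ = isolation G q (S ∪ T) := by rw [hAST]

end IsIsolatedCore

theorem stmt3_general (G : SimpleGraph V) (hloc : ∀ v : V, (G.neighborSet v).Finite)
    (q : ℝ) {ι : Type*} (s : Finset ι) (f : ι → Set V)
    (hf : ∀ i ∈ s, IsIsolatedCore G q (f i)) :
    IsIsolatedCore G q (⋃ i ∈ s, f i) := by
  classical
  induction s using Finset.induction_on with
  | empty => simpa only [Finset.notMem_empty, Set.iUnion_of_empty, Set.iUnion_empty]
      using isIsolatedCore_empty G q
  | insert a t _ ih =>
    rw [Finset.set_biUnion_insert]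
    exact (hf a (Finset.mem_insert_self a t)).union hloc
      (ih fun i hi => hf i (Finset.mem_insert_of_mem hi))

/-- Let `q > 0`. The union of finitely many `q`-isolated cores of `G` is again a
`q`-isolated core of `G`. -/
theorem stmt3 (G : SimpleGraph V) (hloc : ∀ v : V, (G.neighborSet v).Finite)
    (q : ℝ) (hq : 0 < q) {ι : Type*} (s : Finset ι) (f : ι → Set V)
    (hf : ∀ i ∈ s, IsIsolatedCore G q (f i)) :
    IsIsolatedCore G q (⋃ i ∈ s, f i) :=
  stmt3_general G hloc q s f hf
end

section
/- Let 0 < q' < q. Then A_{q'} ⊆ A_q, i.e. the union of all q'-isolated cores of G is contained in the union of all q-isolated cores of G. -/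
open SimpleGraph

variable {V : Type*}

/-- Let `0 < q' < q`. Then `A_{q'} ⊆ A_q`, i.e. the union of all `q'`-isolated cores of `G`
is contained in the union of all `q`-isolated cores of `G`. -/
theorem stmt7 (G : SimpleGraph V) (hloc : ∀ v : V, (G.neighborSet v).Finite)
    (q q' : ℝ) (h0 : 0 < q') (hlt : q' < q) :
    coreUnion G q' ⊆ coreUnion G q := by
  intro v hv
  obtain ⟨S, hS, hvS⟩ := hv
  refine ⟨S, ⟨hS.1, ?_⟩, hvS⟩
  intro A hA
  have h1 := hS.2 A hA
  have h2 : (A.ncard : ℝ) < S.ncard := by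
    exact_mod_cast Set.ncard_lt_ncard hA hS.1
  unfold isolation at h1 ⊢
  nlinarith [mul_pos (sub_pos.2 hlt) (sub_pos.2 h2)]
end

section
/- Let q > 0 and let A be a finite vertex subset of G. Then there exists a q-isolated core B of G with B ⊆ A and Δ_q B ≥ Δ_q A. In particular, if A is q-isolated (i.e. Δ_q A > 0), then B is nonempty. -/
open SimpleGraph

variable {V : Type*}

/-- Let `q > 0` and let `A` be a finite vertex subset of `G`. Then there exists a
`q`-isolated core `B` of `G` with `B ⊆ A` and `Δ_q B ≥ Δ_q A`. In particular, if `A` is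
`q`-isolated (i.e. `Δ_q A > 0`), then `B` is nonempty. -/
theorem stmt11 (G : SimpleGraph V) (hloc : ∀ v : V, (G.neighborSet v).Finite)
    (q : ℝ) (hq : 0 < q) (A : Set V) (hA : A.Finite) :
    ∃ B : Set V, IsIsolatedCore G q B ∧ B ⊆ A ∧
      isolation G q A ≤ isolation G q B ∧
      (0 < isolation G q A → B.Nonempty) := by
  classical
  have hP : {B : Set V | B ⊆ A}.Finite := hA.finite_subsets
  obtain ⟨M, hM, hMmax⟩ := Set.exists_max_image _ (isolation G q) hP ⟨A, fun _ hx => hx⟩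
  set Q : Set (Set V) := {B | B ⊆ A ∧ isolation G q M ≤ isolation G q B} with hQdef
  have hQfin : Q.Finite := hP.subset fun B hB => hB.1
  obtain ⟨B, hB, hBmin⟩ := Set.exists_min_image Q Set.ncard hQfin ⟨M, hM, le_refl _⟩
  have hBA : B ⊆ A := hB.1
  have hBfin : B.Finite := hA.subset hBA
  have hisoB : ∀ C : Set V, C ⊆ A → isolation G q C ≤ isolation G q B :=
    fun C hC => (hMmax C hC).trans hB.2
  have hempty : isolation G q (∅ : Set V) = 0 := by
    have : edgeBdry G (∅ : Set V) = ∅ := by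
      ext e; simp [edgeBdry]
    simp [isolation, this]
  refine ⟨B, ⟨hBfin, fun C hC => ?_⟩, hBA, hisoB A (fun _ h => h), fun hpos => ?_⟩
  · have hCA : C ⊆ A := hC.1.trans hBA
    rcases lt_or_eq_of_le (hisoB C hCA) with h | h
    · exact h
    · exfalso
      have hCQ : C ∈ Q := ⟨hCA, hB.2.trans h.ge⟩
      have := hBmin C hCQ
      have := Set.ncard_lt_ncard hC hBfin
      omega
  · rw [Set.nonempty_iff_ne_empty]
    rintro rfl
    have := hisoB A (fun _ h => h)
    rw [hempty] at this
    exact absurd (hpos.trans_le this) (lt_irrefl 0)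
end

section
/- Let q > 0, let T be an infinite tree in which every vertex has finite degree, let S be a nonempty finite vertex subset of T with S ∩ A_q = ∅, and let C be a (possibly empty) q-isolated core of T containing all vertices of A_q that are adjacent to a vertex of S. Then Δ_q(S ∪ C) ≤ Δ_q C. -/
open SimpleGraph

variable {V : Type*}

/-!
Among the subsets of `S ∪ C` of maximal `q`-isolation, one with fewest vertices is a
`q`-isolated core. It therefore lies in `A_q`, so it misses `S` and sits inside the core `C`,
whose isolation bounds that of all its subsets.
-/

section

variable {G : SimpleGraph V} {q : ℝ}

theorem IsIsolatedCore.subset_coreUnion {B : Set V} (hB : IsIsolatedCore G q B) :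
    B ⊆ coreUnion G q :=
  Set.subset_sUnion_of_mem hB

theorem IsIsolatedCore.isolation_le_of_subset_s12 {A C : Set V} (hC : IsIsolatedCore G q C)
    (hA : A ⊆ C) : isolation G q A ≤ isolation G q C := by
  rcases hA.eq_or_ssubset with rfl | hA
  · exact le_rfl
  · exact (hC.2 A hA).le

theorem exists_subset_isolation_le {F : Set V} (hF : F.Finite) :
    ∃ B ⊆ F, ∀ A ⊆ F, isolation G q A ≤ isolation G q B := by
  obtain ⟨B, hBF, hBmax⟩ :=
    hF.finite_subsets.exists_maximalFor (isolation G q) _ ⟨F, Set.Subset.rfl⟩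
  exact ⟨B, hBF, fun A hA => le_of_not_gt fun hlt => hlt.not_ge (hBmax hA hlt.le)⟩

theorem exists_isIsolatedCore_subset_isolation_le {F : Set V} (hF : F.Finite) :
    ∃ B ⊆ F, IsIsolatedCore G q B ∧ ∀ A ⊆ F, isolation G q A ≤ isolation G q B := by
  set M := {B | B ⊆ F ∧ ∀ A ⊆ F, isolation G q A ≤ isolation G q B}
  obtain ⟨B, ⟨hBF, hBmax⟩, hBmin⟩ :=
    (hF.finite_subsets.subset fun B hB => hB.1).exists_minimalFor Set.ncard M
      (exists_subset_isolation_le hF)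
  refine ⟨B, hBF, ⟨hF.subset hBF, fun A hA => ?_⟩, hBmax⟩
  have hAF : A ⊆ F := hA.subset.trans hBF
  refine (hBmax A hAF).lt_of_ne fun hAB => ?_
  have hAM : A ∈ M := ⟨hAF, fun A' hA' => hAB ▸ hBmax A' hA'⟩
  have hcard : A.ncard < B.ncard := Set.ncard_lt_ncard hA (hF.subset hBF)
  exact hcard.not_ge (hBmin hAM hcard.le)

end

theorem stmt12_general (T : SimpleGraph V)
    (q : ℝ) (S C : Set V) (hSfin : S.Finite)
    (hdisj : S ∩ coreUnion T q = ∅) (hC : IsIsolatedCore T q C) :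
    isolation T q (S ∪ C) ≤ isolation T q C := by
  obtain ⟨B, hBSC, hB, hBmax⟩ :=
    exists_isIsolatedCore_subset_isolation_le (G := T) (q := q) (hSfin.union hC.1)
  have hBC : B ⊆ C := fun x hx =>
    (hBSC hx).resolve_left fun hxS =>
      Set.eq_empty_iff_forall_notMem.1 hdisj x ⟨hxS, hB.subset_coreUnion hx⟩
  calc isolation T q (S ∪ C) ≤ isolation T q B := hBmax _ subset_rfl
    _ ≤ isolation T q C := hC.isolation_le_of_subset_s12 hBC

/-- Let `q > 0`, let `T` be an infinite tree in which every vertex has finite degree, let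
`S` be a nonempty finite vertex subset of `T` with `S ∩ A_q = ∅`, and let `C` be a
(possibly empty) `q`-isolated core of `T` containing all vertices of `A_q` that are
adjacent to a vertex of `S`. Then `Δ_q(S ∪ C) ≤ Δ_q C`. -/
theorem stmt12 (T : SimpleGraph V) [Infinite V] (htree : T.IsTree)
    (hloc : ∀ v : V, (T.neighborSet v).Finite)
    (q : ℝ) (hq : 0 < q) (S C : Set V) (hSne : S.Nonempty) (hSfin : S.Finite)
    (hdisj : S ∩ coreUnion T q = ∅) (hC : IsIsolatedCore T q C)
    (hCadj : ∀ x ∈ coreUnion T q, (∃ y ∈ S, T.Adj x y) → x ∈ C) :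
    isolation T q (S ∪ C) ≤ isolation T q C :=
  stmt12_general T q S C hSfin hdisj hC
end
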